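/- Let σ > 0 and δ ∈ (0,1). Then the infimum over α > 1 of α/(2σ²) + (1/(α−1))·log(1/δ) is bounded above by (1/σ)·√(2·log(1/δ)) + 1/(2σ²). -/

import Mathlib

/-! The objective `α / (2σ²) + L / (α - 1)`, with `L = log (1 / δ) > 0`, is positive on `α > 1`,
so its infimum is at most its value at any admissible `α`. At `α = 1 + σ s` with `s = √(2L)`
the two `s`-dependent terms balance, each contributing `s / (2σ)`. -/

open Real Set

/-- The `ε` of the `(ε, δ)`-DP guarantee obtained from `(α, α / (2σ²))`-Rényi DP,
where `L = log (1 / δ)`. -/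
noncomputable def gaussianDPEpsilon (σ L α : ℝ) : ℝ :=
  α / (2 * σ ^ 2) + (1 / (α - 1)) * L

lemma gaussianDPEpsilon_nonneg {σ L α : ℝ} (hL : 0 ≤ L) (hα : 1 < α) :
    0 ≤ gaussianDPEpsilon σ L α := by
  have hα1 : 0 < α - 1 := sub_pos.mpr hα
  unfold gaussianDPEpsilon
  positivity

lemma bddBelow_gaussianDPEpsilon_image {σ L : ℝ} (hL : 0 ≤ L) :
    BddBelow (gaussianDPEpsilon σ L '' Ioi 1) :=
  ⟨0, by
    rintro _ ⟨α, hα, rfl⟩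
    exact gaussianDPEpsilon_nonneg hL hα⟩

lemma gaussianDPEpsilon_one_add_mul {σ : ℝ} (hσ : σ ≠ 0) (s : ℝ) :
    gaussianDPEpsilon σ (s ^ 2 / 2) (1 + σ * s) = (1 / σ) * s + 1 / (2 * σ ^ 2) := by
  unfold gaussianDPEpsilon
  rcases eq_or_ne s 0 with rfl | hs
  · simp
  · field_simp
    ring

theorem stmt_7 (σ δ : ℝ) (hσ : 0 < σ) (hδ : δ ∈ Set.Ioo (0:ℝ) 1) :
    sInf ((fun α => α / (2 * σ ^ 2) + (1 / (α - 1)) * Real.log (1 / δ)) '' Set.Ioi 1)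
      ≤ (1 / σ) * Real.sqrt (2 * Real.log (1 / δ)) + 1 / (2 * σ ^ 2) := by
  obtain ⟨hδ0, hδ1⟩ := hδ
  set L := log (1 / δ)
  have hL : 0 < L := log_pos (one_lt_one_div hδ0 hδ1)
  set s := √(2 * L)
  have hL_eq : L = s ^ 2 / 2 := by
    rw [sq_sqrt (by positivity)]
    ring
  have hα : 1 + σ * s ∈ Ioi 1 := by
    have : 0 < s := sqrt_pos.mpr (by positivity)
    simp only [mem_Ioi, lt_add_iff_pos_right]
    positivity
  calc sInf (gaussianDPEpsilon σ L '' Ioi 1)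
      ≤ gaussianDPEpsilon σ L (1 + σ * s) :=
        csInf_le (bddBelow_gaussianDPEpsilon_image hL.le) (mem_image_of_mem _ hα)
    _ = (1 / σ) * s + 1 / (2 * σ ^ 2) := by
        rw [hL_eq, gaussianDPEpsilon_one_add_mul hσ.ne']
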